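/- arXiv:1207.4988 — 2 statements merged into one kernel-verified Lean document; each statement's English description precedes it below -/
import Mathlib

section
/- If a random vector X in ℝ^d is centrally symmetric about z* (i.e., X - z* and z* - X have the same distribution) and D is a depth function satisfying affine invariance (D1, D2) and ray-monotonicity (D4, with respect to some maximizer), and D attains its maximum, then D(·|X) is maximal at z*. -/
open MeasureTheory

/-- If `μ` (the law of `X`) is centrally symmetric about `zstar`, and `D` is a depth
function satisfying translation invariance (D1), linear invariance (D2), attains its
maximum at some `z0` and is ray-monotone about `z0` (D4), then `D (·|μ)` is maximal
at `zstar`. -/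
theorem stmt2 {d : ℕ}
    (D : EuclideanSpace ℝ (Fin d) → Measure (EuclideanSpace ℝ (Fin d)) → ℝ)
    (hD1 : ∀ (z b : EuclideanSpace ℝ (Fin d)) (μ : Measure (EuclideanSpace ℝ (Fin d))),
      D (z + b) (Measure.map (fun x => x + b) μ) = D z μ)
    (hD2 : ∀ (z : EuclideanSpace ℝ (Fin d)) (μ : Measure (EuclideanSpace ℝ (Fin d)))
      (A : EuclideanSpace ℝ (Fin d) ≃ₗ[ℝ] EuclideanSpace ℝ (Fin d)),
      D (A z) (Measure.map A μ) = D z μ)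
    (μ : Measure (EuclideanSpace ℝ (Fin d))) [IsProbabilityMeasure μ]
    (z0 : EuclideanSpace ℝ (Fin d)) (hz0max : ∀ z, D z μ ≤ D z0 μ)
    (hray : ∀ r : EuclideanSpace ℝ (Fin d), ‖r‖ = 1 →
      ∀ a b : ℝ, 0 < a → a ≤ b → D (z0 + b • r) μ ≤ D (z0 + a • r) μ)
    (zstar : EuclideanSpace ℝ (Fin d))
    (hsym : Measure.map (fun x => x - zstar) μ = Measure.map (fun x => zstar - x) μ) :
    ∀ z, D z μ ≤ D zstar μ := by
  -- reflection invariance: D (2 zstar - z) μ = D z μ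
  have hmsub : Measurable (fun x : EuclideanSpace ℝ (Fin d) => x - zstar) :=
    measurable_id.sub_const zstar
  have hmadd : Measurable (fun x : EuclideanSpace ℝ (Fin d) => x + zstar) :=
    measurable_id.add_const zstar
  have hmneg : Measurable (fun x : EuclideanSpace ℝ (Fin d) => -x) := measurable_neg
  have hμ : Measure.map (fun x => x + zstar) (Measure.map (fun x => x - zstar) μ) = μ := by
    rw [Measure.map_map hmadd hmsub]
    have : ((fun x => x + zstar) ∘ fun x : EuclideanSpace ℝ (Fin d) => x - zstar) = id := by
      funext x; simp
    rw [this, Measure.map_id]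
  have hν : Measure.map (fun x => x + zstar)
      (Measure.map (fun x : EuclideanSpace ℝ (Fin d) => -x) μ)
      = Measure.map (fun x => zstar - x) μ := by
    rw [Measure.map_map hmadd hmneg]
    congr 1
    funext x
    simp [sub_eq_neg_add]
  have key : ∀ z, D ((2 : ℝ) • zstar - z) μ = D z μ := by
    intro z
    have h1 : D z μ = D (z - zstar) (Measure.map (fun x => x - zstar) μ) := by
      conv_lhs => rw [← hμ]
      have := hD1 (z - zstar) zstar (Measure.map (fun x => x - zstar) μ)
      rw [sub_add_cancel] at this
      rw [this]
    have h2 : D (z - zstar) (Measure.map (fun x => zstar - x) μ)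
        = D (z - zstar - zstar) (Measure.map (fun x : EuclideanSpace ℝ (Fin d) => -x) μ) := by
      conv_lhs => rw [← hν]
      have := hD1 (z - zstar - zstar) zstar
        (Measure.map (fun x : EuclideanSpace ℝ (Fin d) => -x) μ)
      rw [sub_add_cancel] at this
      rw [this]
    have h3 : D (z - zstar - zstar) (Measure.map (fun x : EuclideanSpace ℝ (Fin d) => -x) μ)
        = D (-(z - zstar - zstar)) μ := by
      have := hD2 (-(z - zstar - zstar)) μ (LinearEquiv.neg ℝ)
      have hc : ⇑(LinearEquiv.neg ℝ (M := EuclideanSpace ℝ (Fin d)))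
          = (fun x : EuclideanSpace ℝ (Fin d) => -x) := by
        funext x; simp
      rw [hc] at this
      simp only [neg_neg] at this
      rw [← this]
    have h4 : -(z - zstar - zstar) = (2 : ℝ) • zstar - z := by
      rw [two_smul]; abel
    rw [h1, hsym, h2, h3, h4]
  intro z
  by_cases hz : z0 = zstar
  · rw [← hz]; exact hz0max z
  · set c : ℝ := ‖zstar - z0‖ with hc
    have hcpos : 0 < c := by
      rw [hc, norm_pos_iff]
      intro h
      exact hz (sub_eq_zero.mp h).symm
    set r : EuclideanSpace ℝ (Fin d) := c⁻¹ • (zstar - z0) with hr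
    have hrn : ‖r‖ = 1 := by
      rw [hr, norm_smul, norm_inv, Real.norm_eq_abs, abs_of_pos hcpos, ← hc,
        inv_mul_cancel₀ hcpos.ne']
    have h1 : z0 + c • r = zstar := by
      rw [hr, smul_smul, mul_inv_cancel₀ hcpos.ne', one_smul]
      abel
    have h2 : z0 + (2 * c) • r = (2 : ℝ) • zstar - z0 := by
      rw [hr, smul_smul, mul_assoc, mul_inv_cancel₀ hcpos.ne', mul_one, two_smul, two_smul]
      abel
    have hmono := hray r hrn c (2 * c) hcpos (by linarith)
    rw [h1, h2, key z0] at hmono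
    exact le_trans (hz0max z) hmono
end

section
/- Let weights w_{j,α} (j = 1,…,n, α ∈ [0,1]) satisfy: Σⱼ w_{j,α} = 1 with w_{j,α} ≥ 0; and for α < β, Σ_{j=1}^k w_{j,α} ≤ Σ_{j=1}^k w_{j,β} for all k. Then the weighted-mean regions D_α = conv{Σⱼ w_{j,α} x^{π(j)} : π a permutation of {1,…,n}} are nested: α > β implies D_α ⊆ D_β. -/
/-!
A generator of `D_α` is the `w_α`-weighted mean of a permutation of the data. By Hahn–Banach it
lies in the convex hull `D_β` as soon as every linear functional `f` is, at that point, at most its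
value at some generator of `D_β`. Sort the values `f (x (π j))` increasingly: since `w_α` is
increasing, the rearrangement inequality says that sorting only increases the `w_α`-weighted
mean, and since `w_β` has smaller partial sums than `w_α`, Abel summation says that `w_β` puts
more weight on the large sorted values than `w_α` does.
-/

open Finset

section Abel

variable {ι R : Type*} [LinearOrder ι] [CommRing R] [LinearOrder R] [IsStrictOrderedRing R]

/-- Abel summation. The bound `c` is there for the induction, which removes the maximum `a` of `s`
and applies the hypothesis to the rest with `c := b a`. -/
theorem le_sum_mul_of_prefix_sum_nonpos {F b : ι → R} (hb : Monotone b) (s : Finset ι)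
    (hF : ∀ k ∈ s, ∑ j ∈ s with j ≤ k, F j ≤ 0) {c : R} (hc : ∀ j ∈ s, b j ≤ c) :
    c * ∑ j ∈ s, F j ≤ ∑ j ∈ s, F j * b j := by
  classical
  induction s using Finset.induction_on_max generalizing c with
  | empty => simp
  | insert a s ha ih =>
    have has : a ∉ s := fun h => lt_irrefl a (ha a h)
    have hprefix : ∀ k ∈ s, ∑ j ∈ insert a s with j ≤ k, F j = ∑ j ∈ s with j ≤ k, F j :=
      fun k hk => by rw [filter_insert, if_neg (not_le.2 (ha k hk))]
    have htotal : ∑ j ∈ insert a s with j ≤ a, F j = ∑ j ∈ insert a s, F j := by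
      rw [filter_true_of_mem (by simpa using fun j hj => (ha j hj).le)]
    have hs : b a * ∑ j ∈ s, F j ≤ ∑ j ∈ s, F j * b j :=
      ih (fun k hk => hprefix k hk ▸ hF k (mem_insert_of_mem hk))
        (fun j hj => hb (ha j hj).le)
    have hP : ∑ j ∈ insert a s, F j ≤ 0 := htotal ▸ hF a (mem_insert_self a s)
    calc c * ∑ j ∈ insert a s, F j
        ≤ b a * ∑ j ∈ insert a s, F j :=
          mul_le_mul_of_nonpos_right (hc a (mem_insert_self a s)) hP
      _ ≤ ∑ j ∈ insert a s, F j * b j := by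
          rw [sum_insert has, sum_insert has, mul_add]
          linarith

theorem sum_mul_le_sum_mul_of_prefix_sum_le [Fintype ι] {u v b : ι → R} (hb : Monotone b)
    (hpart : ∀ k, ∑ j with j ≤ k, u j ≤ ∑ j with j ≤ k, v j)
    (hsum : ∑ j, u j = ∑ j, v j) :
    ∑ j, v j * b j ≤ ∑ j, u j * b j := by
  obtain ⟨c, hc⟩ := (Set.finite_range b).bddAbove
  have := le_sum_mul_of_prefix_sum_nonpos (F := u - v) hb univ
    (fun k _ => by simpa [sum_sub_distrib] using hpart k) (c := c)
    (fun j _ => hc (Set.mem_range_self j))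
  simp only [Pi.sub_apply, sum_sub_distrib, hsum, sub_self, mul_zero, sub_mul] at this
  linarith

end Abel

section Rearrangement

variable {R : Type*} [CommRing R] [LinearOrder R] [IsStrictOrderedRing R]

theorem sum_mul_le_sum_mul_sort {n : ℕ} {u v : Fin n → R} (hv : Monotone v)
    (hpart : ∀ k, ∑ j with j ≤ k, u j ≤ ∑ j with j ≤ k, v j)
    (hsum : ∑ j, u j = ∑ j, v j) (a : Fin n → R) :
    ∑ j, v j * a j ≤ ∑ j, u j * a (Tuple.sort a j) :=
  have hsorted : Monotone (a ∘ Tuple.sort a) := Tuple.monotone_sort a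
  calc ∑ j, v j * a j = ∑ j, v j * (a ∘ Tuple.sort a) ((Tuple.sort a)⁻¹ j) := by simp
    _ ≤ ∑ j, v j * a (Tuple.sort a j) := (hv.monovary hsorted).sum_mul_comp_perm_le_sum_mul
    _ ≤ ∑ j, u j * a (Tuple.sort a j) := sum_mul_le_sum_mul_of_prefix_sum_le hsorted hpart hsum

end Rearrangement

theorem mem_convexHull_of_forall_exists_le {E : Type*} [TopologicalSpace E] [AddCommGroup E]
    [Module ℝ E] [IsTopologicalAddGroup E] [ContinuousSMul ℝ E] [LocallyConvexSpace ℝ E]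
    [T2Space E] {S : Set E} (hS : S.Finite) {y : E}
    (h : ∀ f : StrongDual ℝ E, ∃ z ∈ S, f y ≤ f z) : y ∈ convexHull ℝ S := by
  by_contra hy
  obtain ⟨f, t, hf, hft⟩ :=
    geometric_hahn_banach_closed_point (convex_convexHull ℝ S) (hS.isClosed_convexHull ℝ) hy
  obtain ⟨z, hz, hyz⟩ := h f
  exact (hft.trans_le hyz).not_gt (hf z (subset_convexHull ℝ S hz))

theorem stmt18_general {d n : ℕ} (x : Fin n → (Fin d → ℝ))
    (w : Fin n → ℝ → ℝ)
    (hwsum : ∀ α ∈ Set.Icc (0:ℝ) 1, (∑ j, w j α) = 1)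
    (hwmono : ∀ α ∈ Set.Icc (0:ℝ) 1, ∀ j k : Fin n, j ≤ k → w j α ≤ w k α)
    (hpartial : ∀ α ∈ Set.Icc (0:ℝ) 1, ∀ β ∈ Set.Icc (0:ℝ) 1, α < β →
      ∀ k : Fin n, (∑ j ∈ Finset.univ.filter (· ≤ k), w j α)
        ≤ ∑ j ∈ Finset.univ.filter (· ≤ k), w j β)
    (Dz : ℝ → Set (Fin d → ℝ))
    (hDz : ∀ α, Dz α = convexHull ℝ
      {y | ∃ π : Equiv.Perm (Fin n), y = ∑ j, w j α • x (π j)}) :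
    ∀ α ∈ Set.Icc (0:ℝ) 1, ∀ β ∈ Set.Icc (0:ℝ) 1, β < α → Dz α ⊆ Dz β := by
  intro α hα β hβ hβα
  rw [hDz α, hDz β]
  refine convexHull_min ?_ (convex_convexHull ℝ _)
  rintro _ ⟨π, rfl⟩
  have hfinite : {y | ∃ σ : Equiv.Perm (Fin n), y = ∑ j, w j β • x (σ j)}.Finite := by
    refine (Set.finite_range fun σ : Equiv.Perm (Fin n) => ∑ j, w j β • x (σ j)).subset ?_
    rintro _ ⟨σ, rfl⟩
    exact ⟨σ, rfl⟩
  refine mem_convexHull_of_forall_exists_le hfinite fun f => ?_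
  set a : Fin n → ℝ := fun j => f (x (π j))
  refine ⟨_, ⟨(Tuple.sort a).trans π, rfl⟩, ?_⟩
  simpa [map_sum, a] using sum_mul_le_sum_mul_sort (hwmono α hα) (hpartial β hβ α hα hβα)
    (by rw [hwsum β hβ, hwsum α hα]) a

/-- Weighted-mean regions built from weights satisfying (i) nonnegativity and
normalization, (ii) monotonicity in j, (iii) partial sums increasing in α, are
nested: α > β implies D_α ⊆ D_β. -/
theorem stmt18 {d n : ℕ} (x : Fin n → (Fin d → ℝ))
    (w : Fin n → ℝ → ℝ)
    (hw0 : ∀ α ∈ Set.Icc (0:ℝ) 1, ∀ j, 0 ≤ w j α)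
    (hwsum : ∀ α ∈ Set.Icc (0:ℝ) 1, (∑ j, w j α) = 1)
    (hwmono : ∀ α ∈ Set.Icc (0:ℝ) 1, ∀ j k : Fin n, j ≤ k → w j α ≤ w k α)
    (hpartial : ∀ α ∈ Set.Icc (0:ℝ) 1, ∀ β ∈ Set.Icc (0:ℝ) 1, α < β →
      ∀ k : Fin n, (∑ j ∈ Finset.univ.filter (· ≤ k), w j α)
        ≤ ∑ j ∈ Finset.univ.filter (· ≤ k), w j β)
    (Dz : ℝ → Set (Fin d → ℝ))
    (hDz : ∀ α, Dz α = convexHull ℝ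
      {y | ∃ π : Equiv.Perm (Fin n), y = ∑ j, w j α • x (π j)}) :
    ∀ α ∈ Set.Icc (0:ℝ) 1, ∀ β ∈ Set.Icc (0:ℝ) 1, β < α → Dz α ⊆ Dz β :=
  stmt18_general x w hwsum hwmono hpartial Dz hDz
end
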